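/- Let w_0, w_1, ..., w_k be a sequence of vertices and l : V → Finset(Fin 3) a labelling such that l(w_0) = {1}, l(w_k) = {2}, every l(w_i) is a nonempty subset of {1,2,3}, and {1,2} ⊄ l(w_{i-1}) ∪ l(w_i) for all i. Then there exist indices i, j with l(w_{i-1}) ∪ l(w_i) ⊇ {1,3} and l(w_{j-1}) ∪ l(w_j) ⊇ {2,3}. -/
import Mathlib


/-- Along a sequence of nonempty labels `l(w 0) = {1}, ..., l(w k) = {2}` contained in
`{1,2,3}` such that no consecutive union contains both `1` and `2`, there is a consecutive
union containing `{1,3}` and one containing `{2,3}`. -/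
theorem stmt_10 {V : Type*} (k : ℕ) (hk : 1 ≤ k) (w : ℕ → V) (l : V → Finset ℕ)
    (hsub : ∀ i ≤ k, l (w i) ⊆ ({1, 2, 3} : Finset ℕ))
    (hne : ∀ i ≤ k, (l (w i)).Nonempty)
    (h0 : l (w 0) = {1}) (hkk : l (w k) = {2})
    (hnot12 : ∀ i, 1 ≤ i → i ≤ k → ¬ ({1, 2} : Finset ℕ) ⊆ l (w (i - 1)) ∪ l (w i)) :
    (∃ i, 1 ≤ i ∧ i ≤ k ∧ ({1, 3} : Finset ℕ) ⊆ l (w (i - 1)) ∪ l (w i)) ∧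
    (∃ j, 1 ≤ j ∧ j ≤ k ∧ ({2, 3} : Finset ℕ) ⊆ l (w (j - 1)) ∪ l (w j)) := by
  constructor
  · -- minimal i with 1 ∉ l (w i)
    have hex : ∃ i, (1 : ℕ) ∉ l (w i) := ⟨k, by rw [hkk]; simp⟩
    classical
    let i := Nat.find hex
    have hi : (1 : ℕ) ∉ l (w i) := Nat.find_spec hex
    have hi1 : 1 ≤ i := by
      rcases Nat.eq_zero_or_pos i with h | h
      · exfalso; apply hi; rw [show i = 0 from h, h0]; simp
      · exact h
    have hik : i ≤ k := by
      by_contra h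
      push_neg at h
      exact Nat.find_min hex (m := k) h (by rw [hkk]; simp)
    have hprev : (1 : ℕ) ∈ l (w (i - 1)) := by
      by_contra h
      exact absurd (Nat.find_min hex (m := i - 1) (by omega) h) (fun c => c)
    have hno2 : (2 : ℕ) ∉ l (w (i - 1)) ∪ l (w i) := by
      intro h2
      apply hnot12 i hi1 hik
      intro x hx
      simp only [Finset.mem_insert, Finset.mem_singleton] at hx
      rcases hx with rfl | rfl
      · exact Finset.mem_union_left _ hprev
      · exact h2
    obtain ⟨x, hx⟩ := hne i hik
    have hx3 : x = 3 := by
      have := hsub i hik hx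
      simp only [Finset.mem_insert, Finset.mem_singleton] at this
      rcases this with rfl | rfl | rfl
      · exact absurd hx hi
      · exact absurd (Finset.mem_union_right _ hx) hno2
      · rfl
    refine ⟨i, hi1, hik, ?_⟩
    intro y hy
    simp only [Finset.mem_insert, Finset.mem_singleton] at hy
    rcases hy with rfl | rfl
    · exact Finset.mem_union_left _ hprev
    · exact Finset.mem_union_right _ (hx3 ▸ hx)
  · -- minimal j with 2 ∈ l (w j)
    have hex : ∃ j, (2 : ℕ) ∈ l (w j) := ⟨k, by rw [hkk]; simp⟩
    classical
    let j := Nat.find hex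
    have hj : (2 : ℕ) ∈ l (w j) := Nat.find_spec hex
    have hj1 : 1 ≤ j := by
      rcases Nat.eq_zero_or_pos j with h | h
      · exfalso
        have := hj
        rw [show j = 0 from h, h0] at this
        simp at this
      · exact h
    have hjk : j ≤ k := Nat.find_min' hex (by rw [hkk]; simp)
    have hprev2 : (2 : ℕ) ∉ l (w (j - 1)) := Nat.find_min hex (by omega)
    have hprev1 : (1 : ℕ) ∉ l (w (j - 1)) := by
      intro h1
      apply hnot12 j hj1 hjk
      intro x hx
      simp only [Finset.mem_insert, Finset.mem_singleton] at hx
      rcases hx with rfl | rfl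
      · exact Finset.mem_union_left _ h1
      · exact Finset.mem_union_right _ hj
    obtain ⟨x, hx⟩ := hne (j - 1) (by omega)
    have hx3 : x = 3 := by
      have := hsub (j - 1) (by omega) hx
      simp only [Finset.mem_insert, Finset.mem_singleton] at this
      rcases this with rfl | rfl | rfl
      · exact absurd hx hprev1
      · exact absurd hx hprev2
      · rfl
    refine ⟨j, hj1, hjk, ?_⟩
    intro y hy
    simp only [Finset.mem_insert, Finset.mem_singleton] at hy
    rcases hy with rfl | rfl
    · exact Finset.mem_union_right _ hj
    · exact Finset.mem_union_left _ (hx3 ▸ hx)
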